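/- arXiv:2508.05050 — 2 statements merged into one kernel-verified Lean document; each statement's English description precedes it below -/
import Mathlib

section
/- For an ensemble of n states, the optimal discrimination probability under any measurement class containing trivial guessing equals 1/n if and only if all prior probabilities are 1/n and all states are identical: p_L(E) = 1/n ⟺ η_1 = ⋯ = η_n = 1/n and ρ_1 = ⋯ = ρ_n. -/
open Matrix BigOperators ComplexOrder

noncomputable section

/-- Tensor product of a family of local operators, one per party/step. -/
def tensorFam {m : ℕ} {ι : Fin m → Type*} [∀ k, Fintype (ι k)]
    (A : (k : Fin m) → Matrix (ι k) (ι k) ℂ) :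
    Matrix ((k : Fin m) → ι k) ((k : Fin m) → ι k) ℂ :=
  Matrix.of fun i j => ∏ k, A k (i k) (j k)

/-- Separable operator: a sum of tensor products of positive semidefinite local operators. -/
def IsSep {m : ℕ} {ι : Fin m → Type*} [∀ k, Fintype (ι k)]
    (E : Matrix ((k : Fin m) → ι k) ((k : Fin m) → ι k) ℂ) : Prop :=
  ∃ (S : Finset ℕ) (A : ℕ → (k : Fin m) → Matrix (ι k) (ι k) ℂ),
    (∀ s ∈ S, ∀ k, (A s k).PosSemidef) ∧ E = ∑ s ∈ S, tensorFam (A s)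

/-- Separable state: separable with trace one. -/
def IsSepState {m : ℕ} {ι : Fin m → Type*} [∀ k, Fintype (ι k)]
    (σ : Matrix ((k : Fin m) → ι k) ((k : Fin m) → ι k) ℂ) : Prop :=
  IsSep σ ∧ σ.trace = 1

/-- Block positive: nonnegative mean value on every separable state. -/
def IsBlockPos {m : ℕ} {ι : Fin m → Type*} [∀ k, Fintype (ι k)]
    (E : Matrix ((k : Fin m) → ι k) ((k : Fin m) → ι k) ℂ) : Prop :=
  ∀ σ, IsSepState σ → 0 ≤ ((E * σ).trace).re

def IsPOVM {α N : Type*} [Fintype α] [Fintype N] [DecidableEq N]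
    (M : α → Matrix N N ℂ) : Prop :=
  (∀ i, (M i).PosSemidef) ∧ ∑ i, M i = 1

/-- Average success probability of a guessing strategy. -/
def succProb {α N : Type*} [Fintype α] [Fintype N]
    (η : α → ℝ) (ρ M : α → Matrix N N ℂ) : ℝ :=
  ∑ i, η i * ((ρ i * M i).trace).re

/-!
Trivial guessing of `x` succeeds with probability `η x`, so `p_L = 1/n` forces `η x ≤ 1/n` for
every `x`, hence `η x = 1/n` since the priors sum to one. The two-outcome measurement `{σ, 1 - σ}`
on the outcomes `i, x` then succeeds with probability `1/n + (tr (ρ i σ) - tr (ρ x σ)) / n`, so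
`ρ x - ρ i` is block positive for all `x ≠ i`, and so is its negative. A Hermitian operator
whose expectation vanishes on all product states is zero: `A ↦ tr (E (A₁ ⊗ ⋯ ⊗ Aₘ))` is
multilinear, and density matrices span each local matrix algebra by polarization. Conversely,
with equal priors and equal states every POVM succeeds with probability exactly `1/n`.
-/

def densityMatrices (N : Type*) [Fintype N] : Set (Matrix N N ℂ) :=
  {A | A.PosSemidef ∧ A.trace = 1}

section DensityMatrices

variable {N : Type*} [Fintype N]

theorem Matrix.IsHermitian.im_trace_mul {A B : Matrix N N ℂ} (hA : A.IsHermitian)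
    (hB : B.IsHermitian) : (A * B).trace.im = 0 := by
  rw [← Complex.conj_eq_iff_im, ← Complex.star_def, ← trace_conjTranspose, conjTranspose_mul,
    hA.eq, hB.eq, trace_mul_comm]

theorem Matrix.PosSemidef.mem_span_densityMatrices {A : Matrix N N ℂ} (hA : A.PosSemidef) :
    A ∈ Submodule.span ℂ (densityMatrices N) := by
  by_cases h : A.trace = 0
  · rw [hA.trace_eq_zero_iff.1 h]
    exact zero_mem _
  · have hnorm : (A.trace)⁻¹ • A ∈ densityMatrices N :=
      ⟨hA.smul (inv_nonneg.2 hA.trace_nonneg), by rw [trace_smul, smul_eq_mul, inv_mul_cancel₀ h]⟩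
    simpa [smul_smul, mul_inv_cancel₀ h] using
      Submodule.smul_mem _ A.trace (Submodule.subset_span hnorm)

variable [DecidableEq N]

omit [Fintype N] in
theorem single_two_eq_polarization {a b : N} (hab : a ≠ b) :
    let u : N → ℂ := Pi.single a 1 + Pi.single b 1
    let w : N → ℂ := Pi.single a 1 + Complex.I • Pi.single b 1
    single a b (2 : ℂ) = vecMulVec u (star u) + Complex.I • vecMulVec w (star w)
      - (1 + Complex.I) • (single a a 1 + single b b 1) := by
  intro u w
  ext x y
  simp only [u, w, vecMulVec_apply, single_apply, Matrix.sub_apply, Matrix.add_apply,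
    Matrix.smul_apply, Pi.add_apply, Pi.smul_apply, Pi.star_apply, Pi.single_apply, smul_eq_mul,
    Complex.star_def, map_add, map_mul, apply_ite (starRingEnd ℂ), map_one, map_zero, Complex.conj_I]
  split_ifs <;> grind [Complex.I_mul_I]

theorem single_one_mem_span_densityMatrices (a b : N) :
    single a b (1 : ℂ) ∈ Submodule.span ℂ (densityMatrices N) := by
  have hrank_one (v : N → ℂ) : vecMulVec v (star v) ∈ Submodule.span ℂ (densityMatrices N) :=
    (posSemidef_vecMulVec_self_star v).mem_span_densityMatrices
  have hdiag (c : N) : single c c (1 : ℂ) ∈ Submodule.span ℂ (densityMatrices N) := by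
    simpa [← single_eq_single_vecMulVec_single] using hrank_one (Pi.single c 1)
  obtain rfl | hab := eq_or_ne a b
  · exact hdiag a
  · have h2 : single a b (2 : ℂ) ∈ Submodule.span ℂ (densityMatrices N) := by
      rw [single_two_eq_polarization hab]
      exact sub_mem (add_mem (hrank_one _) (Submodule.smul_mem _ _ (hrank_one _)))
        (Submodule.smul_mem _ _ (add_mem (hdiag a) (hdiag b)))
    simpa [smul_single] using Submodule.smul_mem _ (2⁻¹ : ℂ) h2

theorem span_densityMatrices : Submodule.span ℂ (densityMatrices N) = ⊤ := by
  refine Submodule.eq_top_iff'.2 fun A => ?_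
  rw [matrix_eq_sum_single A]
  refine Submodule.sum_mem _ fun a _ => Submodule.sum_mem _ fun b _ => ?_
  simpa [smul_single] using Submodule.smul_mem _ (A a b) (single_one_mem_span_densityMatrices a b)

end DensityMatrices

section Ensemble

variable {α N : Type*} [Fintype α] [Fintype N] [DecidableEq N]

theorem succProb_const_of_isPOVM {c : ℝ} {ρ₀ : Matrix N N ℂ} {M : α → Matrix N N ℂ}
    (hM : IsPOVM M) (hρ₀ : ρ₀.trace = 1) : succProb (fun _ => c) (fun _ => ρ₀) M = c := by
  rw [succProb, ← Finset.mul_sum, ← Complex.re_sum, ← trace_sum, ← Finset.mul_sum, hM.2,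
    mul_one, hρ₀, Complex.one_re, mul_one]

variable [DecidableEq α]

def trivialGuess (x : α) : α → Matrix N N ℂ :=
  fun i => if i = x then 1 else 0

def twoOutcome (x i : α) (σ : Matrix N N ℂ) : α → Matrix N N ℂ :=
  fun j => if j = i then σ else if j = x then 1 - σ else 0

theorem succProb_trivialGuess {η : α → ℝ} {ρ : α → Matrix N N ℂ} {x : α}
    (hρ : (ρ x).trace = 1) : succProb η ρ (trivialGuess x) = η x := by
  rw [succProb, Finset.sum_eq_single x (fun i _ hi => by simp [trivialGuess, hi]) (by simp)]
  simp [trivialGuess, hρ]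

theorem succProb_twoOutcome {η : α → ℝ} {ρ : α → Matrix N N ℂ} {x i : α} (hxi : x ≠ i)
    (hρ : (ρ x).trace = 1) (σ : Matrix N N ℂ) :
    succProb η ρ (twoOutcome x i σ) =
      η i * (ρ i * σ).trace.re + η x * (1 - (ρ x * σ).trace.re) := by
  rw [succProb, ← Finset.sum_subset (Finset.subset_univ {i, x})
    fun j _ hj => by simp_all [twoOutcome], Finset.sum_pair hxi.symm]
  simp [twoOutcome, hxi, mul_sub, hρ]

end Ensemble

section Multipartite

variable {m : ℕ} {ι : Fin m → Type*} [∀ k, Fintype (ι k)]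

theorem trace_tensorFam (A : (k : Fin m) → Matrix (ι k) (ι k) ℂ) :
    (tensorFam A).trace = ∏ k, (A k).trace :=
  (Fintype.prod_sum fun k x => A k x x).symm

theorem isHermitian_tensorFam {A : (k : Fin m) → Matrix (ι k) (ι k) ℂ}
    (hA : ∀ k, (A k).IsHermitian) : (tensorFam A).IsHermitian := by
  ext i j
  simp only [conjTranspose_apply, tensorFam, of_apply, star_prod]
  exact Finset.prod_congr rfl fun k _ => (hA k).apply (i k) (j k)

theorem isSepState_tensorFam {A : (k : Fin m) → Matrix (ι k) (ι k) ℂ}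
    (hA : ∀ k, A k ∈ densityMatrices (ι k)) : IsSepState (tensorFam A) :=
  ⟨⟨{0}, fun _ => A, fun _ _ k => (hA k).1, by simp⟩,
    by rw [trace_tensorFam, Finset.prod_eq_one fun k _ => (hA k).2]⟩

def traceMulTensorFam (E : Matrix ((k : Fin m) → ι k) ((k : Fin m) → ι k) ℂ) :
    MultilinearMap ℂ (fun k => Matrix (ι k) (ι k) ℂ) ℂ :=
  ∑ i, ∑ j, E i j • (MultilinearMap.mkPiAlgebra ℂ (Fin m) ℂ).compLinearMap
    fun k => entryLinearMap ℂ ℂ (j k) (i k)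

theorem traceMulTensorFam_apply (E : Matrix ((k : Fin m) → ι k) ((k : Fin m) → ι k) ℂ)
    (A : (k : Fin m) → Matrix (ι k) (ι k) ℂ) :
    traceMulTensorFam E A = (E * tensorFam A).trace := by
  simp [traceMulTensorFam, trace, mul_apply, tensorFam]

theorem IsBlockPos.of_smul {E : Matrix ((k : Fin m) → ι k) ((k : Fin m) → ι k) ℂ} {c : ℝ}
    (hc : 0 < c) (h : IsBlockPos (c • E)) : IsBlockPos E := fun σ hσ => by
  have := h σ hσ
  rw [smul_mul_assoc, trace_smul, Complex.smul_re, smul_eq_mul] at this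
  exact nonneg_of_mul_nonneg_right this hc

variable [∀ k, DecidableEq (ι k)]

theorem tensorFam_single (a b : (k : Fin m) → ι k) :
    tensorFam (fun k => single (a k) (b k) (1 : ℂ)) = single a b 1 := by
  ext i j
  simp [tensorFam, single_apply, Finset.prod_boole, funext_iff, forall_and]

theorem eq_zero_of_trace_mul_tensorFam_eq_zero
    {E : Matrix ((k : Fin m) → ι k) ((k : Fin m) → ι k) ℂ}
    (h : ∀ A, (∀ k, A k ∈ densityMatrices (ι k)) → (E * tensorFam A).trace = 0) : E = 0 := by
  have hzero : traceMulTensorFam E = 0 :=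
    MultilinearMap.ext_of_span_eq_top (g := fun k (A : densityMatrices (ι k)) => A.1)
      (fun k => by simpa using span_densityMatrices)
      (fun A => by simpa [traceMulTensorFam_apply] using h _ fun k => (A k).2)
  ext a b
  simpa [traceMulTensorFam_apply, tensorFam_single, trace_mul_single] using
    congr($hzero fun k => single (b k) (a k) (1 : ℂ))

theorem IsBlockPos.eq_zero_of_neg
    {E : Matrix ((k : Fin m) → ι k) ((k : Fin m) → ι k) ℂ} (hE : E.IsHermitian)
    (h : IsBlockPos E) (hneg : IsBlockPos (-E)) : E = 0 := by
  refine eq_zero_of_trace_mul_tensorFam_eq_zero fun A hA => ?_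
  have hσ := isSepState_tensorFam hA
  refine Complex.ext (le_antisymm ?_ (h _ hσ)) (hE.im_trace_mul ?_)
  · simpa [Matrix.neg_mul, trace_neg] using hneg _ hσ
  · exact isHermitian_tensorFam fun k => (hA k).1.isHermitian

theorem isBlockPos_smul_sub_of_succProb_twoOutcome_le
    {α : Type*} [Fintype α] [DecidableEq α]
    {η : α → ℝ} {ρ : α → Matrix ((k : Fin m) → ι k) ((k : Fin m) → ι k) ℂ} {x i : α}
    (hxi : x ≠ i) (hρ : (ρ x).trace = 1)
    (h : ∀ σ, IsSepState σ → succProb η ρ (twoOutcome x i σ) ≤ η x) :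
    IsBlockPos (η x • ρ x - η i • ρ i) := fun σ hσ => by
  have := h σ hσ
  rw [succProb_twoOutcome hxi hρ] at this
  simp only [Matrix.sub_mul, smul_mul_assoc, trace_sub, trace_smul, Complex.sub_re,
    Complex.smul_re, smul_eq_mul]
  linarith

end Multipartite

theorem optimal_eq_inv_n_iff_general {m : ℕ} {ι : Fin m → Type*}
    [∀ k, Fintype (ι k)] [∀ k, DecidableEq (ι k)] {n : ℕ} (hn : 0 < n)
    (η : Fin n → ℝ) (ρ : Fin n → Matrix ((k : Fin m) → ι k) ((k : Fin m) → ι k) ℂ)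
    (hsum : ∑ i, η i = 1)
    (hρ : ∀ i, (ρ i).PosSemidef ∧ (ρ i).trace = 1)
    (C : Set (Fin n → Matrix ((k : Fin m) → ι k) ((k : Fin m) → ι k) ℂ))
    (hC : ∀ M ∈ C, IsPOVM M ∧ ∀ i, IsSep (M i))
    (htriv : ∀ x : Fin n, (fun i => if i = x then (1 : Matrix ((k : Fin m) → ι k) ((k : Fin m) → ι k) ℂ) else 0) ∈ C)
    (htwo : ∀ x i : Fin n, x ≠ i →
      ∀ σ : Matrix ((k : Fin m) → ι k) ((k : Fin m) → ι k) ℂ, IsSepState σ →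
        (fun j => if j = i then σ else if j = x then 1 - σ else 0) ∈ C)
    (pL : ℝ) (hpL : IsLUB ((fun M => succProb η ρ M) '' C) pL) :
    pL = 1 / n ↔ ((∀ i, η i = 1 / n) ∧ (∀ i j, ρ i = ρ j)) := by
  have hn_inv : (0 : ℝ) < 1 / n := by positivity
  have hη_le (x : Fin n) : η x ≤ pL := hpL.1 ⟨_, htriv x, succProb_trivialGuess (hρ x).2⟩
  constructor
  · intro hpL_eq
    have hη : ∀ i, η i = 1 / n := fun i =>
      (Finset.sum_eq_sum_iff_of_le fun j _ => (hη_le j).trans_eq hpL_eq).1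
        (by simp [hsum, hn.ne']) i (Finset.mem_univ i)
    have hblock (x i : Fin n) (hxi : x ≠ i) : IsBlockPos (ρ x - ρ i) :=
      IsBlockPos.of_smul hn_inv <| by
        simpa [hη, smul_sub] using isBlockPos_smul_sub_of_succProb_twoOutcome_le hxi (hρ x).2
          fun σ hσ => (hpL.1 ⟨_, htwo x i hxi σ hσ, rfl⟩).trans (hpL_eq.trans (hη x).symm).le
    refine ⟨hη, fun i j => ?_⟩
    obtain rfl | hij := eq_or_ne i j
    · rfl
    refine sub_eq_zero.1 <| (hblock i j hij).eq_zero_of_neg ((hρ i).1.1.sub (hρ j).1.1) ?_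
    simpa using hblock j i hij.symm
  · rintro ⟨hη, hρ_eq⟩
    have hconst (M) (hM : M ∈ C) : succProb η ρ M = 1 / n := by
      rw [show η = fun _ => (1 / n : ℝ) from funext hη,
        show ρ = fun _ => ρ ⟨0, hn⟩ from funext fun i => hρ_eq i _]
      exact succProb_const_of_isPOVM (hC M hM).1 (hρ _).2
    rw [Set.image_congr hconst, Set.Nonempty.image_const ⟨_, htriv ⟨0, hn⟩⟩] at hpL
    exact hpL.unique isLUB_singleton

/-- for a class of separable POVMs containing the trivial guessing
measurements and the two-outcome coarse-grainings {σ, 1−σ} with σ separable,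
the optimal guessing probability equals 1/n iff all priors are 1/n and all states
are identical. -/
theorem optimal_eq_inv_n_iff {m : ℕ} {ι : Fin m → Type*}
    [∀ k, Fintype (ι k)] [∀ k, DecidableEq (ι k)] {n : ℕ} (hn : 0 < n)
    (η : Fin n → ℝ) (ρ : Fin n → Matrix ((k : Fin m) → ι k) ((k : Fin m) → ι k) ℂ)
    (hη : ∀ i, 0 < η i) (hsum : ∑ i, η i = 1)
    (hρ : ∀ i, (ρ i).PosSemidef ∧ (ρ i).trace = 1)
    (C : Set (Fin n → Matrix ((k : Fin m) → ι k) ((k : Fin m) → ι k) ℂ))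
    (hC : ∀ M ∈ C, IsPOVM M ∧ ∀ i, IsSep (M i))
    (htriv : ∀ x : Fin n, (fun i => if i = x then (1 : Matrix ((k : Fin m) → ι k) ((k : Fin m) → ι k) ℂ) else 0) ∈ C)
    (htwo : ∀ x i : Fin n, x ≠ i →
      ∀ σ : Matrix ((k : Fin m) → ι k) ((k : Fin m) → ι k) ℂ, IsSepState σ →
        (fun j => if j = i then σ else if j = x then 1 - σ else 0) ∈ C)
    (pL : ℝ) (hpL : IsLUB ((fun M => succProb η ρ M) '' C) pL) :
    pL = 1 / n ↔ ((∀ i, η i = 1 / n) ∧ (∀ i j, ρ i = ρ j)) :=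
  optimal_eq_inv_n_iff_general hn η ρ hsum hρ C hC htriv htwo pL hpL
end
end

section
/- For the m-qudit ensemble E = {(η_i, ρ_i)}_{i=1}^{d+2} with η_i = 1/(d^m+d), ρ_i = |i−1⋯i−1⟩⟨i−1⋯i−1| for i = 1,…,d; η_{d+1} = (d^m−d)/(d^m+d), ρ_{d+1} = (1 − Σ_{j<d} |j⋯j⟩⟨j⋯j|)/(d^m−d); η_{d+2} = d/(d^m+d), ρ_{d+2} = Φ_d^m, the LOCC measurement M_i = |i−1⋯i−1⟩⟨i−1⋯i−1| (i ≤ d), M_{d+1} = 1 − Σ_{j<d}|j⋯j⟩⟨j⋯j|, M_{d+2} = 0 achieves success probability d^m/(d^m+d), and we have max_i η_i = (d^m−d)/(d^m+d) < d^m/(d^m+d); moreover with R_i = (d^m+d)η_iρ_i one has Tr[M_i(1 − R_i)] = 0 for all i = 1,…,d+2. -/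
open Matrix BigOperators ComplexOrder

noncomputable section

/-- The m-qudit GHZ state Φ_d^m = (1/d) Σ_{a,b} |a⋯a⟩⟨b⋯b|. -/
def ghz (m d : ℕ) : Matrix ((_ : Fin m) → Fin d) ((_ : Fin m) → Fin d) ℂ :=
  Matrix.of fun i j =>
    if (∀ k k', i k = i k') ∧ (∀ k k', j k = j k') then (d : ℂ)⁻¹ else 0

/-- The m-qudit projector Ψ_j^m = |j⋯j⟩⟨j⋯j| onto the j-th diagonal product basis
vector (with j given as a natural number). -/
def diagProj (m d : ℕ) (j : ℕ) : Matrix ((_ : Fin m) → Fin d) ((_ : Fin m) → Fin d) ℂ :=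
  Matrix.of fun a b =>
    if (∀ k, ((a k : ℕ) = j)) ∧ (∀ k, ((b k : ℕ) = j)) then 1 else 0

/-!
Apart from the GHZ state everything is diagonal in the computational basis: `diagProj m d j`
projects onto `|j⋯j⟩`, and `1 - ∑ j, diagProj m d j` onto the span of the `d ^ m - d`
non-constant basis strings. Writing `R i = (d ^ m + d) • η i • ρ i`, every `M i` satisfies
`M i * R i = M i`: for `i ≤ d` both are the same projection, and `M (d + 1) = 0`. This gives
`Tr[M i (1 - R i)] = 0` directly, and summing `Tr[M i R i] = Tr (M i)` over the POVM gives the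
success probability `Tr 1 / (d ^ m + d) = d ^ m / (d ^ m + d)`.
-/

section CoordProj

variable {n R : Type*} [DecidableEq n]

def coordProj [Zero R] [One R] (s : Finset n) : Matrix n n R :=
  diagonal fun a => if a ∈ s then 1 else 0

lemma coordProj_mul_self [Fintype n] [Semiring R] (s : Finset n) :
    (coordProj s : Matrix n n R) * coordProj s = coordProj s := by
  simp +contextual [coordProj, diagonal_mul_diagonal]

lemma trace_coordProj [Fintype n] [AddCommMonoidWithOne R] (s : Finset n) :
    (coordProj s : Matrix n n R).trace = s.card := by
  simp [coordProj, trace_diagonal]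

lemma one_sub_coordProj [Fintype n] [Ring R] (s : Finset n) :
    1 - (coordProj s : Matrix n n R) = coordProj sᶜ := by
  rw [coordProj, coordProj, ← diagonal_one, diagonal_sub]
  congr 1
  ext a
  by_cases h : a ∈ s <;> simp [h]

lemma sum_coordProj_singleton [AddCommMonoidWithOne R] (t : Finset n) :
    ∑ x ∈ t, (coordProj {x} : Matrix n n R) = coordProj t := by
  ext a b
  simp [coordProj, Matrix.sum_apply, diagonal_apply]

lemma coordProj_posSemidef [CommRing R] [PartialOrder R] [StarRing R] [StarOrderedRing R]
    (s : Finset n) : (coordProj s : Matrix n n R).PosSemidef :=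
  PosSemidef.diagonal fun a => by dsimp; split_ifs <;> simp

end CoordProj

section Qudits

variable {m d : ℕ}

def constVecs (m d : ℕ) : Finset (Fin m → Fin d) :=
  Finset.univ.image (Function.const (Fin m))

lemma mem_constVecs_iff [NeZero m] {a : Fin m → Fin d} :
    a ∈ constVecs m d ↔ ∀ k k', a k = a k' := by
  simp only [constVecs, Finset.mem_image, Finset.mem_univ, true_and]
  refine ⟨?_, fun h => ⟨a 0, funext fun k => h 0 k⟩⟩
  rintro ⟨j, rfl⟩ _ _
  rfl

lemma card_constVecs [NeZero m] : (constVecs m d).card = d := by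
  rw [constVecs, Finset.card_image_of_injective _ Function.const_injective, Finset.card_univ,
    Fintype.card_fin]

lemma diagProj_eq_coordProj {j : ℕ} (hj : j < d) :
    diagProj m d j = coordProj {Function.const (Fin m) ⟨j, hj⟩} := by
  have hconst (a : Fin m → Fin d) : (∀ k, (a k : ℕ) = j) ↔ a = Function.const _ ⟨j, hj⟩ := by
    simp [funext_iff, Fin.ext_iff]
  ext a b
  simp only [diagProj, coordProj, of_apply, hconst, diagonal_apply, Finset.mem_singleton]
  by_cases ha : a = Function.const _ ⟨j, hj⟩ <;> by_cases hb : b = Function.const _ ⟨j, hj⟩ <;>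
    simp [ha, hb, eq_comm]

lemma sum_diagProj [NeZero m] :
    ∑ j : Fin d, diagProj m d j = coordProj (constVecs m d) := by
  rw [← sum_coordProj_singleton, constVecs,
    Finset.sum_image Function.const_injective.injOn]
  exact Finset.sum_congr rfl fun j _ => diagProj_eq_coordProj j.isLt

lemma ghz_eq_smul_vecMulVec [NeZero m] :
    ghz m d = (d : ℂ)⁻¹ • vecMulVec (fun a => if a ∈ constVecs m d then 1 else 0)
      (star fun a => if a ∈ constVecs m d then 1 else 0) := by
  ext a b
  by_cases ha : a ∈ constVecs m d <;> by_cases hb : b ∈ constVecs m d <;>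
    simp [ghz, vecMulVec_apply, ← mem_constVecs_iff, ha, hb]

lemma ghz_posSemidef [NeZero m] : (ghz m d).PosSemidef := by
  rw [ghz_eq_smul_vecMulVec]
  exact (posSemidef_vecMulVec_self_star _).smul (inv_nonneg.2 (Nat.cast_nonneg d))

lemma trace_ghz [NeZero m] [NeZero d] : (ghz m d).trace = 1 := by
  simp [trace, ghz, ← mem_constVecs_iff, card_constVecs]

lemma card_compl_constVecs {R : Type*} [Ring R] [NeZero m] :
    ((constVecs m d)ᶜ.card : R) = (d : R) ^ m - d := by
  rw [Finset.card_compl, Nat.cast_sub (Finset.card_le_univ _), card_constVecs]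
  simp

lemma one_sub_sum_diagProj [NeZero m] :
    1 - ∑ j : Fin d, diagProj m d j = coordProj (constVecs m d)ᶜ := by
  rw [sum_diagProj, one_sub_coordProj]

end Qudits

lemma succProb_eq_of_mul_smul_eq {α N : Type*} [Fintype α] [Fintype N] [DecidableEq N]
    {η : α → ℝ} {ρ M : α → Matrix N N ℂ} {c : ℝ} (hc : c ≠ 0) (hM : ∑ i, M i = 1)
    (hMR : ∀ i, M i * (c • η i • ρ i) = M i) :
    succProb η ρ M = Fintype.card N / c := by
  have hterm : ∀ i, η i * ((ρ i * M i).trace).re = c⁻¹ * ((M i).trace).re := fun i => by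
    conv_rhs => rw [← hMR i]
    rw [mul_smul_comm, mul_smul_comm, trace_smul, trace_smul, trace_mul_comm]
    simp [hc]
  calc succProb η ρ M = c⁻¹ * ((∑ i, M i).trace).re := by
        simp [succProb, hterm, trace_sum, Finset.mul_sum]
    _ = Fintype.card N / c := by simp [hM, div_eq_inv_mul]

section ExampleTwo

variable {m d : ℕ}

lemma two_mul_le_pow (hm : 2 ≤ m) (hd : 2 ≤ d) : 2 * d ≤ d ^ m :=
  calc 2 * d ≤ d * d := Nat.mul_le_mul_right d hd
    _ = d ^ 2 := (sq d).symm
    _ ≤ d ^ m := Nat.pow_le_pow_right (by omega) hm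

-- Indices are 0-based: the paper's `η_i, ρ_i, M_i` are at index `i - 1` here.
variable (m d) in
def exampleWeight (i : Fin (d + 2)) : ℝ :=
  if (i : ℕ) < d then ((d : ℝ) ^ m + d)⁻¹
  else if (i : ℕ) = d then ((d : ℝ) ^ m - d) / ((d : ℝ) ^ m + d)
  else (d : ℝ) / ((d : ℝ) ^ m + d)

variable (m d) in
def exampleState (i : Fin (d + 2)) : Matrix (Fin m → Fin d) (Fin m → Fin d) ℂ :=
  if (i : ℕ) < d then diagProj m d i
  else if (i : ℕ) = d then ((d : ℂ) ^ m - d)⁻¹ • (1 - ∑ j : Fin d, diagProj m d j)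
  else ghz m d

variable (m d) in
def exampleMeasurement (i : Fin (d + 2)) : Matrix (Fin m → Fin d) (Fin m → Fin d) ℂ :=
  if (i : ℕ) < d then diagProj m d i
  else if (i : ℕ) = d then 1 - ∑ j : Fin d, diagProj m d j
  else 0

lemma exampleWeight_pos [NeZero d] (hdm : d < d ^ m) (i : Fin (d + 2)) :
    0 < exampleWeight m d i := by
  have hd : (0 : ℝ) < d := by exact_mod_cast NeZero.pos d
  have hdm : (d : ℝ) < d ^ m := by exact_mod_cast hdm
  have hN : (0 : ℝ) < d ^ m + d := by positivity
  unfold exampleWeight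
  split_ifs
  · positivity
  · exact div_pos (sub_pos.2 hdm) hN
  · exact div_pos hd hN

lemma sum_exampleWeight [NeZero d] : ∑ i, exampleWeight m d i = 1 := by
  have hd : (0 : ℝ) < d := by exact_mod_cast NeZero.pos d
  have hN : (d : ℝ) ^ m + d ≠ 0 := by positivity
  calc ∑ i, exampleWeight m d i
      = d * ((d : ℝ) ^ m + d)⁻¹ + ((d : ℝ) ^ m - d) / (d ^ m + d) + d / (d ^ m + d) := by
        simp [Fin.sum_univ_castSucc, exampleWeight]
    _ = 1 := by field_simp; ring

lemma exampleWeight_le [NeZero d] (h2d : 2 * d ≤ d ^ m) (i : Fin (d + 2)) :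
    exampleWeight m d i ≤ ((d : ℝ) ^ m - d) / ((d : ℝ) ^ m + d) := by
  have hd : (1 : ℝ) ≤ d := by exact_mod_cast NeZero.one_le
  have h2d : 2 * (d : ℝ) ≤ d ^ m := by exact_mod_cast h2d
  have hN : (0 : ℝ) < d ^ m + d := by positivity
  unfold exampleWeight
  split_ifs
  · rw [inv_eq_one_div]; gcongr; linarith
  · rfl
  · gcongr; linarith

lemma exampleState_posSemidef [NeZero m] (i : Fin (d + 2)) : (exampleState m d i).PosSemidef := by
  unfold exampleState
  split_ifs with hi
  · rw [diagProj_eq_coordProj hi]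
    exact coordProj_posSemidef _
  · rw [one_sub_sum_diagProj, ← card_compl_constVecs]
    exact (coordProj_posSemidef _).smul (inv_nonneg.2 (Nat.cast_nonneg _))
  · exact ghz_posSemidef

lemma trace_exampleState [NeZero m] [NeZero d] (hdm : d < d ^ m) (i : Fin (d + 2)) :
    (exampleState m d i).trace = 1 := by
  have hdm : (d : ℂ) ^ m - d ≠ 0 := sub_ne_zero.2 (by exact_mod_cast hdm.ne')
  unfold exampleState
  split_ifs with hi
  · rw [diagProj_eq_coordProj hi, trace_coordProj, Finset.card_singleton, Nat.cast_one]
  · rw [trace_smul, one_sub_sum_diagProj, trace_coordProj, card_compl_constVecs, smul_eq_mul,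
      inv_mul_cancel₀ hdm]
  · exact trace_ghz

lemma isPOVM_exampleMeasurement [NeZero m] : IsPOVM (exampleMeasurement m d) := by
  refine ⟨fun i => ?_, ?_⟩
  · unfold exampleMeasurement
    split_ifs with hi
    · rw [diagProj_eq_coordProj hi]
      exact coordProj_posSemidef _
    · rw [one_sub_sum_diagProj]
      exact coordProj_posSemidef _
    · exact PosSemidef.zero
  · simp [Fin.sum_univ_castSucc, exampleMeasurement]

lemma exampleMeasurement_mul_smul_exampleState [NeZero m] (hdm : d < d ^ m) (i : Fin (d + 2)) :
    exampleMeasurement m d i * (((d : ℝ) ^ m + d) • exampleWeight m d i • exampleState m d i) =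
      exampleMeasurement m d i := by
  have hN : (0 : ℝ) < d ^ m + d := by
    have : (d : ℝ) < d ^ m := by exact_mod_cast hdm
    linarith [Nat.cast_nonneg (α := ℝ) d]
  have hdmC : (d : ℂ) ^ m - d ≠ 0 := sub_ne_zero.2 (by exact_mod_cast hdm.ne')
  unfold exampleMeasurement exampleWeight exampleState
  split_ifs with hi
  · rw [smul_smul, mul_inv_cancel₀ hN.ne', one_smul, diagProj_eq_coordProj hi, coordProj_mul_self]
  · rw [smul_smul, mul_div_cancel₀ _ hN.ne', ← Complex.coe_smul, smul_smul]
    push_cast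
    rw [mul_inv_cancel₀ hdmC, one_smul, one_sub_sum_diagProj, coordProj_mul_self]
  · rw [zero_mul]

end ExampleTwo

/-- for the m-qudit ensemble of Example 2 and its LOCC measurement M,
the ensemble is well formed, M is a POVM, its success probability is d^m/(d^m+d),
max_i η_i = (d^m−d)/(d^m+d) < d^m/(d^m+d), and Tr[M_i(1 − R_i)] = 0 for all i,
where R_i = (d^m+d)η_iρ_i. -/
theorem example_two_locc_measurement (m d : ℕ) (hm : 2 ≤ m) (hd : 2 ≤ d)
    (η : Fin (d + 2) → ℝ)
    (ρ M : Fin (d + 2) → Matrix ((_ : Fin m) → Fin d) ((_ : Fin m) → Fin d) ℂ)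
    (hη : ∀ i, η i =
      if (i : ℕ) < d then ((d : ℝ) ^ m + d)⁻¹
      else if (i : ℕ) = d then ((d : ℝ) ^ m - d) / ((d : ℝ) ^ m + d)
      else (d : ℝ) / ((d : ℝ) ^ m + d))
    (hρ : ∀ i, ρ i =
      if (i : ℕ) < d then diagProj m d i
      else if (i : ℕ) = d then
        ((d : ℂ) ^ m - d)⁻¹ • (1 - ∑ j : Fin d, diagProj m d j)
      else ghz m d)
    (hM : ∀ i, M i =
      if (i : ℕ) < d then diagProj m d i
      else if (i : ℕ) = d then 1 - ∑ j : Fin d, diagProj m d j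
      else 0) :
    (∀ i, 0 < η i) ∧ (∑ i, η i = 1) ∧
    (∀ i, (ρ i).PosSemidef ∧ (ρ i).trace = 1) ∧
    IsPOVM M ∧
    succProb η ρ M = (d : ℝ) ^ m / ((d : ℝ) ^ m + d) ∧
    (∀ i, η i ≤ ((d : ℝ) ^ m - d) / ((d : ℝ) ^ m + d)) ∧
    ((d : ℝ) ^ m - d) / ((d : ℝ) ^ m + d) < (d : ℝ) ^ m / ((d : ℝ) ^ m + d) ∧
    (∀ i, ((M i) * (1 - (((d : ℝ) ^ m + d) • (η i • ρ i)))).trace = 0) := by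
  have : NeZero m := ⟨by omega⟩
  have : NeZero d := ⟨by omega⟩
  obtain rfl : η = exampleWeight m d := funext hη
  obtain rfl : ρ = exampleState m d := funext hρ
  obtain rfl : M = exampleMeasurement m d := funext hM
  have h2d : 2 * d ≤ d ^ m := two_mul_le_pow hm hd
  have hdm : d < d ^ m := by omega
  have hN : (0 : ℝ) < d ^ m + d := by positivity
  have hMR := exampleMeasurement_mul_smul_exampleState hdm
  refine ⟨exampleWeight_pos hdm, sum_exampleWeight,
    fun i => ⟨exampleState_posSemidef i, trace_exampleState hdm i⟩, isPOVM_exampleMeasurement,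
    ?_, exampleWeight_le h2d, ?_, fun i => ?_⟩
  · rw [succProb_eq_of_mul_smul_eq hN.ne' isPOVM_exampleMeasurement.2 hMR]
    simp
  · gcongr
    exact sub_lt_self _ (by exact_mod_cast NeZero.pos d)
  · rw [mul_sub, mul_one, hMR i, sub_self, trace_zero]
end
end
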